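/- For every bounded real sequence x ∈ ℓ∞, the limit Λ(x) = limₙ→∞ supᵢ≥₁ (1/n) Σⱼ₌₀^{n−1} x_{i+j} exists; moreover, if x is a convergent sequence then Λ(x) = limₙ→∞ xₙ. -/

import Mathlib

noncomputable section
open scoped ENNReal
open Filter Finset Topology

/-! The maximal window sums `u n = supᵢ ∑_{j<n} x_{i+j}` form a subadditive sequence bounded
below by `-n‖x‖`, so `u n / n` converges by Fekete's lemma. If `x → a`, the window averages
converge to `a` uniformly in the starting index `i`, since only the first `N` terms of `x`
can be far from `a`; hence so does their supremum. -/

/-- `ℓ∞`: the Banach space of bounded real sequences with the sup norm. -/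
abbrev Linf : Type := lp (fun _ : ℕ => ℝ) ∞

def windowSum (x : ℕ → ℝ) (n i : ℕ) : ℝ := ∑ j ∈ range n, x (i + j)

def maxWindowSum (x : ℕ → ℝ) (n : ℕ) : ℝ := ⨆ i, windowSum x n i

section

variable {x : ℕ → ℝ}

theorem windowSum_add (m n i : ℕ) :
    windowSum x (m + n) i = windowSum x m i + windowSum x n (i + m) := by
  simp only [windowSum, sum_range_add, add_assoc]

theorem windowSum_le {b : ℝ} {i : ℕ} (hb : ∀ k ≥ i, x k ≤ b) (n : ℕ) :
    windowSum x n i ≤ n * b := by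
  simpa [windowSum] using
    sum_le_card_nsmul (range n) _ b fun j _ => hb (i + j) (Nat.le_add_right i j)

theorem abs_windowSum_le {C : ℝ} (hC : ∀ k, |x k| ≤ C) (n i : ℕ) :
    |windowSum x n i| ≤ n * C := by
  refine abs_le.2 ⟨?_, windowSum_le (fun k _ => (le_abs_self _).trans (hC k)) n⟩
  have := windowSum_le (x := fun k => -x k) (i := i) (fun k _ => (neg_le_abs _).trans (hC k)) n
  simp only [windowSum, sum_neg_distrib] at this
  exact neg_le.1 this

theorem windowSum_sub_const (a : ℝ) (n i : ℕ) :
    windowSum (fun k => x k - a) n i = windowSum x n i - n * a := by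
  simp [windowSum, sum_sub_distrib]

theorem bddAbove_range_windowSum {C : ℝ} (hC : ∀ k, |x k| ≤ C) (n : ℕ) :
    BddAbove (Set.range (windowSum x n)) :=
  ⟨n * C, by rintro _ ⟨i, rfl⟩; exact (le_abs_self _).trans (abs_windowSum_le hC n i)⟩

theorem subadditive_maxWindowSum {C : ℝ} (hC : ∀ k, |x k| ≤ C) :
    Subadditive (maxWindowSum x) := fun m n =>
  ciSup_le fun i => (windowSum_add m n i).trans_le <|
    add_le_add (le_ciSup (bddAbove_range_windowSum hC m) i)
      (le_ciSup (bddAbove_range_windowSum hC n) (i + m))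

theorem tendsto_maxWindowSum_div {C : ℝ} (hC : ∀ k, |x k| ≤ C) :
    Tendsto (fun n => maxWindowSum x n / n) atTop (𝓝 (subadditive_maxWindowSum hC).lim) := by
  refine (subadditive_maxWindowSum hC).tendsto_lim ⟨-C, ?_⟩
  rintro _ ⟨n, rfl⟩
  rcases Nat.eq_zero_or_pos n with rfl | hn
  · simpa [maxWindowSum, windowSum] using (abs_nonneg _).trans (hC 0)
  have hwindow : -(n * C) ≤ maxWindowSum x n :=
    (neg_le_of_abs_le (abs_windowSum_le hC n 0)).trans
      (le_ciSup (bddAbove_range_windowSum hC n) 0)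
  rw [le_div_iff₀ (Nat.cast_pos.2 hn)]
  linarith

theorem iSup_windowSum_div (n : ℕ) :
    ⨆ i, windowSum x n i / n = maxWindowSum x n / n := by
  simp only [div_eq_mul_inv, maxWindowSum, Real.iSup_mul_of_nonneg (inv_nonneg.2 n.cast_nonneg)]

theorem windowSum_le_of_forall_ge_le {D ε : ℝ} {N n : ℕ} (hD : ∀ k, x k ≤ D)
    (hε : ∀ k ≥ N, x k ≤ ε) (hε₀ : 0 ≤ ε) (hn : N ≤ n) (i : ℕ) :
    windowSum x n i ≤ N * D + n * ε := by
  obtain ⟨m, rfl⟩ := Nat.exists_eq_add_of_le hn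
  rw [windowSum_add]
  have hhead := windowSum_le (fun k _ => hD k) N (i := i)
  have htail := windowSum_le (fun k hk => hε k (by omega)) m (i := i + N)
  have hNε : 0 ≤ (N : ℝ) * ε := mul_nonneg N.cast_nonneg hε₀
  push_cast
  linarith

theorem tendstoUniformly_windowSum_div {C a : ℝ} (hC : ∀ k, |x k| ≤ C)
    (hx : Tendsto x atTop (𝓝 a)) :
    TendstoUniformly (fun n i => windowSum x n i / n) (fun _ => a) atTop := by
  rw [Metric.tendstoUniformly_iff]
  intro ε hε
  obtain ⟨N, hN⟩ := Metric.tendsto_atTop.1 hx (ε / 2) (half_pos hε)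
  have hD : ∀ k, |x k - a| ≤ C + |a| := fun k => (abs_sub _ _).trans (add_le_add_left (hC k) _)
  have hsmall : ∀ᶠ n : ℕ in atTop, N * (C + |a|) / n < ε / 2 :=
    (tendsto_const_div_atTop_nhds_zero_nat _).eventually (gt_mem_nhds (half_pos hε))
  filter_upwards [hsmall, eventually_ge_atTop N, eventually_gt_atTop 0] with n hn hNn hn₀ i
  have hn₀' : (0 : ℝ) < n := Nat.cast_pos.2 hn₀
  have hsum : |windowSum x n i - n * a| ≤ N * (C + |a|) + n * (ε / 2) := by
    rw [← windowSum_sub_const]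
    exact (abs_sum_le_sum_abs _ _).trans <| windowSum_le_of_forall_ge_le hD
      (fun k hk => (hN k hk).le) (half_pos hε).le hNn i
  calc dist a (windowSum x n i / n) = |windowSum x n i - n * a| / n := by
        rw [dist_comm, Real.dist_eq, ← abs_of_pos hn₀', ← abs_div, abs_of_pos hn₀']
        congr 1
        field_simp
    _ ≤ (N * (C + |a|) + n * (ε / 2)) / n := by gcongr
    _ = N * (C + |a|) / n + ε / 2 := by field_simp
    _ < ε := by linarith

end

theorem TendstoUniformly.tendsto_iSup {α ι : Type*} [Nonempty ι] {l : Filter α}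
    {F : α → ι → ℝ} {a : ℝ} (hF : TendstoUniformly F (fun _ => a) l) :
    Tendsto (fun n => ⨆ i, F n i) l (𝓝 a) := by
  rw [Metric.tendsto_nhds]
  intro ε hε
  filter_upwards [Metric.tendstoUniformly_iff.1 hF (ε / 2) (half_pos hε)] with n hn
  have hclose : ∀ i, a - ε / 2 < F n i ∧ F n i < a + ε / 2 := fun i => by
    have := abs_lt.1 (hn i)
    constructor <;> linarith
  have hupper : ⨆ i, F n i ≤ a + ε / 2 := ciSup_le fun i => (hclose i).2.le
  have hbdd : BddAbove (Set.range (F n)) :=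
    ⟨a + ε / 2, by rintro _ ⟨i, rfl⟩; exact (hclose i).2.le⟩
  obtain ⟨i₀⟩ := ‹Nonempty ι›
  have hlower : a - ε / 2 ≤ ⨆ i, F n i := (hclose i₀).1.le.trans (le_ciSup hbdd i₀)
  rw [Real.dist_eq, abs_lt]
  constructor <;> linarith

theorem exists_lim_sup_average (x : Linf) :
    ∃ l : ℝ,
      Filter.Tendsto (fun n : ℕ => ⨆ i : ℕ, (∑ j ∈ Finset.range n, x (i + j)) / n)
        Filter.atTop (nhds l) ∧
      ∀ a : ℝ, Filter.Tendsto (fun n => x n) Filter.atTop (nhds a) → l = a := by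
  have hC : ∀ k, |x k| ≤ ‖x‖ := fun k => lp.norm_apply_le_norm ENNReal.top_ne_zero x k
  have hlim : Tendsto (fun n : ℕ => ⨆ i, windowSum (⇑x) n i / n) atTop
      (𝓝 (subadditive_maxWindowSum hC).lim) := by
    simpa only [iSup_windowSum_div] using tendsto_maxWindowSum_div hC
  exact ⟨_, hlim, fun a hx =>
    tendsto_nhds_unique hlim (tendstoUniformly_windowSum_div hC hx).tendsto_iSup⟩
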